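/- arXiv:quant-ph/0602057 — 3 statements merged into one kernel-verified Lean document; each statement's English description precedes it below -/
import Mathlib

section
/- For every attack E, the family (p̄(c))_{c ∈ I} is a probability distribution: p̄(c) ≥ 0 for every c ∈ I and ∑_{c ∈ I} p̄(c) = 1. -/
/-!
Nonnegativity is clear. Substituting `s = l ⊕ c` turns `∑_c p̄(c)` into
`2^{-N} ∑_{l,s} ‖Ē l s‖²`. Up to the factor `2^{-N}`, `E ↦ Ē` is the Walsh–Hadamard
transform on `I × I`; its kernel is orthogonal because `∑_l (-1)^{a·l} = 2^N [a = 0]`,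
so it preserves `∑ ‖·‖²` up to `4^N` (Parseval), and unitarity of the attack gives
`∑_{i,j} ‖E i j‖² = 2^N`.
-/

open scoped ComplexInnerProductSpace ComplexOrder
open Finset

namespace IDT

/-- N-bit strings. -/
abbrev Bits (N : ℕ) := Fin N → ZMod 2

/-- Bitwise dot product `i·k := ∑ n i_n k_n` (lifting bits to naturals). -/
def bdot {N : ℕ} (i k : Bits N) : ℕ := ∑ n, (i n).val * (k n).val

/-- Eve's attack: unitarity condition on the family of vectors. -/
def Attack {N M : ℕ} (E : Bits N → Bits N → EuclideanSpace ℂ (Fin M)) : Prop :=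
  ∀ i k : Bits N, (∑ j : Bits N, ⟪E i j, E k j⟫) = if i = k then 1 else 0

/-- Conjugate-basis vectors `Ē l s := 2^{-N} ∑_{i,j} (-1)^{s·j + i·l} E i j`. -/
noncomputable def Ebar {N M : ℕ} (E : Bits N → Bits N → EuclideanSpace ℂ (Fin M))
    (l s : Bits N) : EuclideanSpace ℂ (Fin M) :=
  (2 ^ N : ℂ)⁻¹ • ∑ i : Bits N, ∑ j : Bits N, ((-1 : ℂ) ^ (bdot s j + bdot i l)) • E i j

/-- Error distribution of Bob's conjugate-basis outcome. -/
noncomputable def pbar {N M : ℕ} (E : Bits N → Bits N → EuclideanSpace ℂ (Fin M))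
    (c : Bits N) : ℝ :=
  (2 ^ N : ℝ)⁻¹ * ∑ i : Bits N, ‖Ebar E i (i + c)‖ ^ 2

/-- `-x log₂ x` (with the convention `0 log₂ 0 = 0`). -/
noncomputable def ent2 (x : ℝ) : ℝ := -(x * Real.logb 2 x)

/-- A POVM on `ℂ^M` with finite outcome set `A`. -/
structure POVM (A : Type*) [Fintype A] (M : ℕ) where
  X : A → Matrix (Fin M) (Fin M) ℂ
  posSemidef : ∀ a : A, (X a).PosSemidef
  sum_one : ∑ a : A, X a = 1

/-- Eve's outcome probability `p(α|i)`. -/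
noncomputable def pOut {N M : ℕ} {A : Type*} [Fintype A]
    (E : Bits N → Bits N → EuclideanSpace ℂ (Fin M)) (P : POVM A M) (a : A) (i : Bits N) : ℝ :=
  (∑ j : Bits N, ⟪E i j, Matrix.toEuclideanLin (P.X a) (E i j)⟫).re

/-- (base-2) Shannon mutual information of a joint distribution. -/
noncomputable def mutualInfo {S T : Type*} [Fintype S] [Fintype T] (p : S → T → ℝ) : ℝ :=
  (∑ s, ent2 (∑ t, p s t)) + (∑ t, ent2 (∑ s, p s t)) - ∑ s, ∑ t, ent2 (p s t)

/-- Eve's information gain `I(A:E[X]|b)`. -/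
noncomputable def infoGain {N M : ℕ} {A : Type*} [Fintype A]
    (E : Bits N → Bits N → EuclideanSpace ℂ (Fin M)) (P : POVM A M) : ℝ :=
  mutualInfo (fun (i : Bits N) (a : A) => (2 ^ N : ℝ)⁻¹ * pOut E P a i)

/-- Elementary tensor of two Euclidean-space vectors. -/
noncomputable def tens {α β : Type*} (u : EuclideanSpace ℂ α) (v : EuclideanSpace ℂ β) :
    EuclideanSpace ℂ (α × β) :=
  (WithLp.equiv 2 ((α × β) → ℂ)).symm (fun p => u p.1 * v p.2)

/-- Symmetrized attack vectors. -/
noncomputable def Es {N M : ℕ} (E : Bits N → Bits N → EuclideanSpace ℂ (Fin M))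
    (i j : Bits N) : EuclideanSpace ℂ (Bits N × Fin M) :=
  (((Real.sqrt (2 ^ N))⁻¹ : ℝ) : ℂ) •
    ∑ m : Bits N, ((-1 : ℂ) ^ bdot m (i + j)) • tens (EuclideanSpace.single m 1) (E (i + m) (j + m))

/-- The operator `|e_m⟩⟨e_m| ⊗ X` as a matrix on `ℂ^{2^N} ⊗ ℂ^M`. -/
def projTens {N M : ℕ} (m : Bits N) (X : Matrix (Fin M) (Fin M) ℂ) :
    Matrix (Bits N × Fin M) (Bits N × Fin M) ℂ :=
  Matrix.of fun p q => (if p.1 = m ∧ q.1 = m then 1 else 0) * X p.2 q.2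

/-- Purification vectors `φ_i`. -/
noncomputable def phi {N M : ℕ} (E : Bits N → Bits N → EuclideanSpace ℂ (Fin M))
    (i : Bits N) : EuclideanSpace ℂ ((Bits N × Fin M) × Bits N) :=
  ∑ j : Bits N, tens (Es E i j) (EuclideanSpace.single (i + j) 1)

/-- Rank-one projection `|ψ⟩⟨ψ|` as a matrix. -/
noncomputable def outer {α : Type*} (ψ : EuclideanSpace ℂ α) : Matrix α α ℂ :=
  Matrix.of fun x y => ψ x * star (ψ y)

/-- Partial trace over the second tensor factor. -/
noncomputable def ptraceSnd {α β : Type*} [Fintype β] (Θ : Matrix (α × β) (α × β) ℂ) : Matrix α α ℂ :=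
  Matrix.of fun i j => ∑ b : β, Θ (i, b) (j, b)

/-- Partial trace over the first tensor factor. -/
noncomputable def ptraceFst {α β : Type*} [Fintype α] (Θ : Matrix (α × β) (α × β) ℂ) : Matrix β β ℂ :=
  Matrix.of fun x y => ∑ a : α, Θ (a, x) (a, y)

-- von Neumann entropy (base 2) of a Hermitian matrix (junk value `0` otherwise).
open Classical in
noncomputable def vN {n : Type*} [Fintype n] [DecidableEq n] (ρ : Matrix n n ℂ) : ℝ :=
  if h : ρ.IsHermitian then ∑ i, ent2 (h.eigenvalues i) else 0

/-- Classical–quantum state `∑ i p_i |e_i⟩⟨e_i| ⊗ ρ_i`. -/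
def cqState {F G : Type*} [DecidableEq F] (p : F → ℝ) (ρ : F → Matrix G G ℂ) :
    Matrix (F × G) (F × G) ℂ :=
  Matrix.of fun x y => if x.1 = y.1 then (p x.1 : ℂ) * ρ x.1 x.2 y.2 else 0

section Parseval

variable {ι κ V : Type*} [Fintype ι] [Fintype κ] [DecidableEq κ]
  [NormedAddCommGroup V] [InnerProductSpace ℂ V]

theorem sum_norm_sq_sum_smul_of_orthogonal (χ : ι → κ → ℂ) (C : ℝ)
    (hχ : ∀ q r, ∑ p, starRingEnd ℂ (χ p q) * χ p r = if q = r then (C : ℂ) else 0)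
    (v : κ → V) :
    ∑ p, ‖∑ q, χ p q • v q‖ ^ 2 = C * ∑ q, ‖v q‖ ^ 2 := by
  have hinner :
      ∑ p, ⟪∑ q, χ p q • v q, ∑ q, χ p q • v q⟫ = (C : ℂ) * ∑ q, ⟪v q, v q⟫ :=
    calc ∑ p, ⟪∑ q, χ p q • v q, ∑ q, χ p q • v q⟫
        = ∑ r, ∑ q, (∑ p, starRingEnd ℂ (χ p q) * χ p r) * ⟪v q, v r⟫ := by
          simp only [sum_inner, inner_sum, inner_smul_left, inner_smul_right, Finset.sum_mul,
            Finset.mul_sum]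
          rw [Finset.sum_comm]
          refine Finset.sum_congr rfl fun r _ => ?_
          rw [Finset.sum_comm]
          exact Finset.sum_congr rfl fun q _ => Finset.sum_congr rfl fun p _ => by ring
      _ = (C : ℂ) * ∑ q, ⟪v q, v q⟫ := by
          simp only [hχ, ite_mul, zero_mul, Finset.sum_ite_eq', Finset.mem_univ, if_true,
            Finset.mul_sum]
  rw [← Complex.ofReal_inj]
  push_cast
  simpa only [inner_self_eq_norm_sq_to_K, Complex.coe_algebraMap] using hinner

end Parseval

section Signs

variable {N : ℕ}

theorem bdot_comm (i k : Bits N) : bdot i k = bdot k i :=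
  Finset.sum_congr rfl fun _ _ => mul_comm _ _

theorem neg_one_pow_bdot (i k : Bits N) :
    (-1 : ℂ) ^ bdot i k = ∏ n, (-1 : ℂ) ^ ((i n).val * (k n).val) :=
  (Finset.prod_pow_eq_pow_sum _ _ _).symm

theorem neg_one_pow_bdot_add_left (i k l : Bits N) :
    (-1 : ℂ) ^ bdot (i + k) l = (-1) ^ bdot i l * (-1) ^ bdot k l := by
  have h (x y z : ZMod 2) :
      (-1 : ℂ) ^ ((x + y).val * z.val) = (-1) ^ (x.val * z.val) * (-1) ^ (y.val * z.val) := by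
    have hmod : (x + y).val * z.val % 2 = (x.val * z.val + y.val * z.val) % 2 := by
      revert x y z; decide
    rw [← pow_add, neg_one_pow_eq_pow_mod_two, hmod, ← neg_one_pow_eq_pow_mod_two]
  simp only [neg_one_pow_bdot, ← Finset.prod_mul_distrib, Pi.add_apply, h]

theorem sum_neg_one_pow_bdot (a : Bits N) :
    ∑ l, (-1 : ℂ) ^ bdot a l = if a = 0 then 2 ^ N else 0 := by
  have h (x : ZMod 2) : ∑ y : ZMod 2, (-1 : ℂ) ^ (x.val * y.val) = if x = 0 then 2 else 0 := by
    fin_cases x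
    · show ∑ y : Fin 2, (-1 : ℂ) ^ (0 * y.val) = if (0 : Fin 2) = 0 then 2 else 0
      simp
    · show ∑ y : Fin 2, (-1 : ℂ) ^ (1 * y.val) = if (1 : Fin 2) = 0 then 2 else 0
      simp [Fin.sum_univ_two]
  simp only [neg_one_pow_bdot]
  -- the character sum factorises over the `N` coordinates
  rw [← Fintype.prod_sum (fun n y => (-1 : ℂ) ^ ((a n).val * (y : ZMod 2).val))]
  simp only [h, Fintype.prod_ite_zero, funext_iff, Pi.zero_apply, Finset.prod_const,
    Finset.card_univ, Fintype.card_fin]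

theorem sum_neg_one_pow_bdot_mul (i k : Bits N) :
    ∑ l, (-1 : ℂ) ^ bdot i l * (-1) ^ bdot k l = if i = k then 2 ^ N else 0 := by
  have hneg : -k = k := funext fun n => ZMod.neg_eq_self_mod_two (k n)
  simp only [← neg_one_pow_bdot_add_left, sum_neg_one_pow_bdot, add_eq_zero_iff_eq_neg, hneg]

theorem sum_neg_one_pow_bdot_pair_mul (q r : Bits N × Bits N) :
    ∑ p : Bits N × Bits N, starRingEnd ℂ ((-1) ^ (bdot p.2 q.2 + bdot q.1 p.1)) *
        (-1) ^ (bdot p.2 r.2 + bdot r.1 p.1) =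
      if q = r then ((2 ^ N * 2 ^ N : ℝ) : ℂ) else 0 := by
  have hsplit (p : Bits N × Bits N) :
      starRingEnd ℂ ((-1) ^ (bdot p.2 q.2 + bdot q.1 p.1)) *
          (-1) ^ (bdot p.2 r.2 + bdot r.1 p.1) =
        ((-1) ^ bdot q.1 p.1 * (-1) ^ bdot r.1 p.1) *
          ((-1) ^ bdot q.2 p.2 * (-1) ^ bdot r.2 p.2) := by
    simp only [pow_add, map_mul, map_pow, map_neg, map_one, bdot_comm p.2]
    ring
  simp only [hsplit, Fintype.sum_prod_type, ← Finset.mul_sum, ← Finset.sum_mul,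
    sum_neg_one_pow_bdot_mul, ite_zero_mul_ite_zero, Prod.ext_iff]
  push_cast
  rfl

end Signs

section Attack

variable {N M : ℕ} (E : Bits N → Bits N → EuclideanSpace ℂ (Fin M))

theorem Ebar_eq_sum_prod (l s : Bits N) :
    Ebar E l s = (2 ^ N : ℂ)⁻¹ •
      ∑ q : Bits N × Bits N, (-1 : ℂ) ^ (bdot s q.2 + bdot q.1 l) • E q.1 q.2 := by
  rw [Ebar, Fintype.sum_prod_type]

theorem sum_norm_sq_Ebar : ∑ l, ∑ s, ‖Ebar E l s‖ ^ 2 = ∑ i, ∑ j, ‖E i j‖ ^ 2 := by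
  calc ∑ l, ∑ s, ‖Ebar E l s‖ ^ 2
      = ((2 ^ N)⁻¹) ^ 2 * ∑ p : Bits N × Bits N,
          ‖∑ q : Bits N × Bits N, (-1 : ℂ) ^ (bdot p.2 q.2 + bdot q.1 p.1) • E q.1 q.2‖ ^ 2 := by
        simp only [Ebar_eq_sum_prod, norm_smul, mul_pow, ← Finset.mul_sum, Fintype.sum_prod_type]
        norm_num
    _ = ((2 ^ N)⁻¹) ^ 2 * ((2 ^ N * 2 ^ N) * ∑ q : Bits N × Bits N, ‖E q.1 q.2‖ ^ 2) := by
        rw [sum_norm_sq_sum_smul_of_orthogonal _ _ sum_neg_one_pow_bdot_pair_mul]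
    _ = ∑ i, ∑ j, ‖E i j‖ ^ 2 := by
        rw [Fintype.sum_prod_type]
        field_simp

variable {E} in
theorem Attack.sum_norm_sq (hE : Attack E) :
    ∑ i, ∑ j, ‖E i j‖ ^ 2 = 2 ^ N := by
  have hrow (i : Bits N) : ∑ j, ‖E i j‖ ^ 2 = 1 := by
    have h := congrArg RCLike.re (hE i i)
    rwa [if_pos rfl, RCLike.one_re, map_sum,
      Finset.sum_congr rfl fun j _ => inner_self_eq_norm_sq _] at h
  simp [hrow]

theorem pbar_nonneg (c : Bits N) : 0 ≤ pbar E c := by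
  unfold pbar
  positivity

theorem sum_pbar : ∑ c, pbar E c = (2 ^ N)⁻¹ * ∑ l, ∑ s, ‖Ebar E l s‖ ^ 2 := by
  simp only [pbar, ← Finset.mul_sum]
  rw [Finset.sum_comm]
  refine congrArg _ (Finset.sum_congr rfl fun i _ => ?_)
  exact Fintype.sum_equiv (Equiv.addLeft i) _ _ fun _ => rfl

end Attack

theorem pbar_isProbability_general {N M : ℕ}
    (E : Bits N → Bits N → EuclideanSpace ℂ (Fin M)) (hE : Attack E) :
    (∀ c : Bits N, 0 ≤ pbar E c) ∧ (∑ c : Bits N, pbar E c) = 1 := by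
  refine ⟨pbar_nonneg E, ?_⟩
  rw [sum_pbar, sum_norm_sq_Ebar, hE.sum_norm_sq]
  exact inv_mul_cancel₀ (by positivity)

/-- Bob's conjugate-basis error distribution is a probability distribution. -/
theorem pbar_isProbability {N M : ℕ} (hN : 1 ≤ N)
    (E : Bits N → Bits N → EuclideanSpace ℂ (Fin M)) (hE : Attack E) :
    (∀ c : Bits N, 0 ≤ pbar E c) ∧ (∑ c : Bits N, pbar E c) = 1 :=
  pbar_isProbability_general E hE

end IDT
end

section
/- Symmetrization does not decrease Eve's information: for every attack E and every POVM (X_α)_{α ∈ A} on ℂ^M, the family (|e_m⟩⟨e_m| ⊗ X_α)_{(m,α) ∈ I × A} is a POVM on ℂ^{2^N} ⊗ ℂ^M, and the Shannon mutual information between the uniform input i ∈ I and the outcome (m, α) with conditional probabilities p^s(m, α | i) := ∑_{j ∈ I} ⟨E^s i j, (|e_m⟩⟨e_m| ⊗ X_α)(E^s i j)⟩ equals Eve's information gain I(A:E[X]|b) computed from the original attack. -/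
open scoped ComplexInnerProductSpace ComplexOrder
open Finset

namespace IDT

/-! The `m`-th block of `E^s i j` is `±2^{-N/2} E (i ⊕ m) (j ⊕ m)`, so
`p^s(m, α | i) = 2^{-N} p(α | i ⊕ m)`: the outcome `m` is uniform and independent of `i`, and
given `m` the pair `(i, α)` is distributed as in the original attack, relabelled by the bijection
`i ↦ i ⊕ m`. Relabelling does not change entropies, hence the mutual information is the same. -/

open Matrix
open scoped Kronecker

lemma sum_comp_add_right {G R : Type*} [AddGroup G] [Fintype G] [AddCommMonoid R] (f : G → R)
    (g : G) : ∑ i, f (i + g) = ∑ i, f i :=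
  Equiv.sum_comp (Equiv.addRight g) f

lemma ent2_mul (x y : ℝ) : ent2 (x * y) = y * ent2 x + x * ent2 y := by
  rcases eq_or_ne x 0 with rfl | hx
  · simp [ent2]
  rcases eq_or_ne y 0 with rfl | hy
  · simp [ent2]
  simp only [ent2, Real.logb_mul hx hy]
  ring

lemma sum_ent2_const_mul {ι : Type*} (s : Finset ι) (c : ℝ) (f : ι → ℝ) :
    ∑ k ∈ s, ent2 (c * f k) = (∑ k ∈ s, f k) * ent2 c + c * ∑ k ∈ s, ent2 (f k) := by
  simp only [ent2_mul, sum_add_distrib, sum_mul, mul_sum]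

theorem mutualInfo_add_shift {G B : Type*} [AddGroup G] [Fintype G] [Fintype B]
    (p : G → B → ℝ) (hrow : ∀ i, ∑ b, p i b = (Fintype.card G : ℝ)⁻¹) :
    mutualInfo (fun (i : G) (gb : G × B) => (Fintype.card G : ℝ)⁻¹ * p (i + gb.1) gb.2) =
      mutualInfo p := by
  set K : ℝ := (Fintype.card G : ℝ)
  have hK : K * K⁻¹ = 1 := mul_inv_cancel₀ (by positivity)
  have htot : ∑ i, ∑ b, p i b = 1 := by simp [hrow, K]
  have hrow_shift (i : G) : ∑ g, ∑ b, K⁻¹ * p (i + g) b = ∑ b, p i b := by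
    simp only [← mul_sum, hrow, sum_const, card_univ, nsmul_eq_mul, K, hK, mul_one]
  have hcol_shift (g : G) (b : B) : ∑ i, K⁻¹ * p (i + g) b = K⁻¹ * ∑ i, p i b := by
    rw [← mul_sum, sum_comp_add_right (p · b) g]
  have hjoint_shift :
      ∑ i, ∑ g, ∑ b, ent2 (K⁻¹ * p (i + g) b) = K * ∑ i, ∑ b, ent2 (K⁻¹ * p i b) := by
    rw [sum_comm]
    simp [sum_comp_add_right (fun i => ∑ b, ent2 (K⁻¹ * p i b)), K]
  unfold mutualInfo
  simp only [Fintype.sum_prod_type, hcol_shift, hrow_shift, hjoint_shift, sum_const, card_univ,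
    nsmul_eq_mul]
  simp only [sum_ent2_const_mul, sum_add_distrib, ← sum_mul, ← mul_sum]
  rw [sum_comm (f := fun b i => p i b), htot]
  -- the entropy `K * ent2 K⁻¹` of the uniform shift enters `H(G × B)` and `H(G, G × B)` alike
  linear_combination (∑ b, ent2 (∑ i, p i b) - ∑ i, ∑ b, ent2 (p i b)) * hK

lemma posSemidef_single_one {α : Type*} [DecidableEq α] (a : α) :
    (single a a (1 : ℂ)).PosSemidef := by
  rw [← diagonal_single]
  exact PosSemidef.diagonal (Pi.single_nonneg.mpr zero_le_one)

def slice {α β : Type*} (v : EuclideanSpace ℂ (α × β)) (a : α) : EuclideanSpace ℂ β :=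
  WithLp.toLp 2 fun b => v (a, b)

lemma inner_single_kronecker {α β : Type*} [Fintype α] [DecidableEq α] [Fintype β] [DecidableEq β]
    (v : EuclideanSpace ℂ (α × β)) (a : α) (X : Matrix β β ℂ) :
    ⟪v, toEuclideanLin (single a a 1 ⊗ₖ X) v⟫ = ⟪slice v a, toEuclideanLin X (slice v a)⟫ := by
  simp [toLpLin_apply, EuclideanSpace.inner_eq_star_dotProduct, dotProduct, mulVec,
    Fintype.sum_prod_type, single_apply, slice, ite_and, Finset.sum_ite_eq, ite_mul]

lemma projTens_eq_kronecker {N M : ℕ} (m : Bits N) (X : Matrix (Fin M) (Fin M) ℂ) :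
    projTens m X = single m m 1 ⊗ₖ X := by
  ext ⟨n, x⟩ ⟨n', y⟩
  simp [projTens, single_apply, eq_comm]

lemma _root_.Matrix.PosSemidef.projTens {N M : ℕ} {X : Matrix (Fin M) (Fin M) ℂ}
    (hX : X.PosSemidef) (m : Bits N) : (projTens m X).PosSemidef := by
  rw [projTens_eq_kronecker]
  exact (posSemidef_single_one m).kronecker hX

lemma sum_projTens {N M : ℕ} {A : Type*} [Fintype A] (P : POVM A M) :
    ∑ m : Bits N, ∑ a, projTens m (P.X a) = 1 := by
  calc ∑ m : Bits N, ∑ a, projTens m (P.X a)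
      = kroneckerBilinear (R := ℂ) (∑ m : Bits N, single m m (1 : ℂ)) (∑ a, P.X a) := by
        simp only [projTens_eq_kronecker, map_sum, LinearMap.sum_apply]
        exact Finset.sum_comm
    _ = 1 := by rw [sum_single_one, P.sum_one]; exact one_kronecker_one

section Symmetrization

variable {N M : ℕ} (E : Bits N → Bits N → EuclideanSpace ℂ (Fin M))

lemma Es_apply (i j m : Bits N) (x : Fin M) :
    Es E i j (m, x) =
      (((√(2 ^ N))⁻¹ : ℝ) * (-1) ^ bdot m (i + j) : ℂ) * E (i + m) (j + m) x := by
  simp [Es, tens, WithLp.ofLp_sum, Finset.sum_apply, mul_assoc]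

lemma slice_Es (i j m : Bits N) :
    slice (Es E i j) m = (((√(2 ^ N))⁻¹ : ℝ) * (-1) ^ bdot m (i + j) : ℂ) • E (i + m) (j + m) := by
  ext x
  simp [slice, Es_apply]

lemma inner_Es_projTens (i j m : Bits N) (X : Matrix (Fin M) (Fin M) ℂ) :
    ⟪Es E i j, toEuclideanLin (projTens m X) (Es E i j)⟫ =
      (2 ^ N : ℂ)⁻¹ * ⟪E (i + m) (j + m), toEuclideanLin X (E (i + m) (j + m))⟫ := by
  rw [projTens_eq_kronecker, inner_single_kronecker, slice_Es, map_smul, inner_smul_left,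
    inner_smul_right, ← mul_assoc, Complex.conj_mul']
  congr 1
  simp [← Complex.ofReal_pow]
  norm_cast

lemma re_sum_inner_Es_projTens {A : Type*} [Fintype A] (P : POVM A M) (i m : Bits N) (a : A) :
    (∑ j, ⟪Es E i j, toEuclideanLin (projTens m (P.X a)) (Es E i j)⟫).re =
      (2 ^ N : ℝ)⁻¹ * pOut E P a (i + m) := by
  simp_rw [inner_Es_projTens, ← mul_sum]
  rw [sum_comp_add_right (fun j => ⟪E (i + m) j, toEuclideanLin (P.X a) (E (i + m) j)⟫),
    show (2 ^ N : ℂ)⁻¹ = ((2 ^ N : ℝ)⁻¹ : ℝ) by push_cast; rfl, Complex.re_ofReal_mul]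
  rfl

lemma sum_pOut {A : Type*} [Fintype A] (hE : Attack E) (P : POVM A M) (i : Bits N) :
    ∑ a, pOut E P a i = 1 := by
  simp only [pOut, ← Complex.re_sum]
  rw [sum_comm]
  simp_rw [← inner_sum, ← LinearMap.sum_apply, ← map_sum, P.sum_one, toLpLin_one,
    LinearMap.id_apply, hE i i]
  simp

end Symmetrization

theorem symmetrization_preserves_info_general {N M : ℕ} {A : Type*} [Fintype A]
    (E : Bits N → Bits N → EuclideanSpace ℂ (Fin M)) (hE : Attack E) (P : POVM A M) :
    (∀ (m : Bits N) (a : A), (projTens m (P.X a)).PosSemidef)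
    ∧ (∑ m : Bits N, ∑ a : A, projTens m (P.X a)) = 1
    ∧ mutualInfo (fun (i : Bits N) (ma : Bits N × A) =>
        (2 ^ N : ℝ)⁻¹ *
          (∑ j : Bits N,
            ⟪Es E i j, Matrix.toEuclideanLin (projTens ma.1 (P.X ma.2)) (Es E i j)⟫).re)
      = infoGain E P := by
  refine ⟨fun m a => (P.posSemidef a).projTens m, sum_projTens P, ?_⟩
  have hcard : (Fintype.card (Bits N) : ℝ) = 2 ^ N := by simp [ZMod.card]
  simp_rw [re_sum_inner_Es_projTens E P, infoGain, ← hcard]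
  exact mutualInfo_add_shift (fun i a => (Fintype.card (Bits N) : ℝ)⁻¹ * pOut E P a i)
    fun i => by rw [← mul_sum, sum_pOut E hE P, mul_one]

/-- Symmetrization does not change Eve's information: the symmetrized measurement family is a
POVM and its mutual information equals the original information gain. -/
theorem symmetrization_preserves_info {N M : ℕ} (hN : 1 ≤ N) {A : Type*} [Fintype A]
    (E : Bits N → Bits N → EuclideanSpace ℂ (Fin M)) (hE : Attack E) (P : POVM A M) :
    (∀ (m : Bits N) (a : A), (projTens m (P.X a)).PosSemidef)
    ∧ (∑ m : Bits N, ∑ a : A, projTens m (P.X a)) = 1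
    ∧ mutualInfo (fun (i : Bits N) (ma : Bits N × A) =>
        (2 ^ N : ℝ)⁻¹ *
          (∑ j : Bits N,
            ⟪Es E i j, Matrix.toEuclideanLin (projTens ma.1 (P.X ma.2)) (Es E i j)⟫).re)
      = infoGain E P :=
  symmetrization_preserves_info_general E hE P

end IDT
end

section
/- The Gram matrix of the purification vectors is XOR-invariant: for every attack E and all i, j ∈ I, ⟨φ_j, φ_i⟩ = f(i⊕j), where f(t) := 2^{-N} ∑_{n,v ∈ I} ⟨E v (v⊕n), E (t⊕v) ((t⊕v)⊕n)⟩. In particular the entries of the Gram matrix depend only on i⊕j. -/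
open scoped ComplexInnerProductSpace ComplexOrder
open Finset

namespace IDT

@[simp] lemma bits_add_self {N : ℕ} (x : Bits N) : x + x = 0 := by
  funext n; exact CharTwo.add_self_eq_zero _

@[simp] lemma bits_add_cancel {N : ℕ} (x y : Bits N) : x + (x + y) = y := by
  rw [← add_assoc, bits_add_self, zero_add]

lemma tens_apply {α β : Type*} (u : EuclideanSpace ℂ α) (v : EuclideanSpace ℂ β)
    (p : α × β) : tens u v p = u p.1 * v p.2 := rfl

lemma inner_tens {α β : Type*} [Fintype α] [Fintype β]
    (u u' : EuclideanSpace ℂ α) (v v' : EuclideanSpace ℂ β) :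
    ⟪tens u v, tens u' v'⟫ = ⟪u, u'⟫ * ⟪v, v'⟫ := by
  simp only [PiLp.inner_apply, RCLike.inner_apply, tens_apply]
  rw [Fintype.sum_prod_type, Finset.sum_mul_sum]
  refine Finset.sum_congr rfl fun a _ => Finset.sum_congr rfl fun b _ => ?_
  simp only [map_mul]; ring

lemma inner_single_single {α : Type*} [Fintype α] [DecidableEq α] (x y : α) :
    ⟪(EuclideanSpace.single x 1 : EuclideanSpace ℂ α), EuclideanSpace.single y 1⟫
      = if x = y then 1 else 0 := by
  rw [EuclideanSpace.inner_single_left]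
  simp [EuclideanSpace.single_apply, eq_comm]

lemma sum_shift {N : ℕ} (c : Bits N) (F : Bits N → ℂ) :
    ∑ x : Bits N, F (c + x) = ∑ x : Bits N, F x :=
  Fintype.sum_bijective _ (Equiv.addLeft c).bijective _ _ (fun _ => rfl)

lemma inner_Es {N M : ℕ} (E : Bits N → Bits N → EuclideanSpace ℂ (Fin M))
    (i j a b : Bits N) (h : j + a = i + b) :
    ⟪Es E j a, Es E i b⟫
      = (2 ^ N : ℂ)⁻¹ * ∑ m : Bits N, ⟪E (j + m) (a + m), E (i + m) (b + m)⟫ := by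
  simp only [Es, inner_smul_left, inner_smul_right, sum_inner, inner_sum,
    inner_smul_left, inner_smul_right, inner_tens, inner_single_single]
  have hc : (starRingEnd ℂ) (((Real.sqrt (2 ^ N))⁻¹ : ℝ) : ℂ) * (((Real.sqrt (2 ^ N))⁻¹ : ℝ) : ℂ)
      = (2 ^ N : ℂ)⁻¹ := by
    rw [Complex.conj_ofReal, ← Complex.ofReal_mul, ← mul_inv,
      Real.mul_self_sqrt (by positivity)]
    push_cast; ring
  simp only [ite_mul, one_mul, zero_mul, mul_ite, mul_zero,
    Finset.sum_ite_eq', Finset.mem_univ, if_true]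
  rw [h, Finset.mul_sum, Finset.mul_sum]
  refine Finset.sum_congr rfl fun m _ => ?_
  rw [map_pow, map_neg, map_one]
  have hs : ((-1 : ℂ)) ^ (bdot m (i + b)) * (-1) ^ (bdot m (i + b)) = 1 := by
    rw [← pow_add, ← two_mul, pow_mul]; norm_num
  calc (((Real.sqrt (2 ^ N))⁻¹ : ℝ) : ℂ) * ((-1) ^ bdot m (i + b) *
        ((starRingEnd ℂ) (((Real.sqrt (2 ^ N))⁻¹ : ℝ) : ℂ) *
          ((-1) ^ bdot m (i + b) * ⟪E (j + m) (a + m), E (i + m) (b + m)⟫)))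
      = ((starRingEnd ℂ) (((Real.sqrt (2 ^ N))⁻¹ : ℝ) : ℂ) * (((Real.sqrt (2 ^ N))⁻¹ : ℝ) : ℂ)) *
        (((-1) ^ bdot m (i + b) * (-1) ^ bdot m (i + b)) *
          ⟪E (j + m) (a + m), E (i + m) (b + m)⟫) := by ring
    _ = (2 ^ N : ℂ)⁻¹ * ⟪E (j + m) (a + m), E (i + m) (b + m)⟫ := by rw [hs, hc, one_mul]

/-- The Gram function `f(t)` of the purification vectors. -/
noncomputable def gramF {N M : ℕ} (E : Bits N → Bits N → EuclideanSpace ℂ (Fin M))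
    (t : Bits N) : ℂ :=
  (2 ^ N : ℂ)⁻¹ * ∑ n : Bits N, ∑ v : Bits N, ⟪E v (v + n), E (t + v) ((t + v) + n)⟫

/-- The Gram matrix of the purification vectors is XOR-invariant. -/
theorem gram_xor_invariant {N M : ℕ} (hN : 1 ≤ N)
    (E : Bits N → Bits N → EuclideanSpace ℂ (Fin M)) (hE : Attack E) (i j : Bits N) :
    ⟪phi E j, phi E i⟫ = gramF E (i + j) := by
  simp only [phi, sum_inner, inner_sum, inner_tens, inner_single_single]
  have hcond : ∀ a b : Bits N, (j + a = i + b) = (b = i + (j + a)) := fun a b => by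
    apply propext
    constructor
    · intro h; rw [h, bits_add_cancel]
    · intro h; rw [h, bits_add_cancel]
  simp only [hcond, mul_ite, mul_one, mul_zero]
  rw [Finset.sum_comm]
  simp only [Finset.sum_ite_eq', Finset.mem_univ, if_true]
  have hEs : ∀ a : Bits N, ⟪Es E j a, Es E i (i + (j + a))⟫
      = (2 ^ N : ℂ)⁻¹ * ∑ m : Bits N, ⟪E (j + m) (a + m), E (i + m) ((i + (j + a)) + m)⟫ :=
    fun a => inner_Es E i j a (i + (j + a)) (bits_add_cancel i (j + a)).symm
  simp only [hEs]
  rw [gramF, ← Finset.mul_sum]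
  congr 1
  rw [← sum_shift j (fun n => ∑ v : Bits N, ⟪E v (v + n), E ((i + j) + v) (((i + j) + v) + n)⟫)]
  refine Finset.sum_congr rfl fun a _ => ?_
  rw [← sum_shift j (fun v => ⟪E v (v + (j + a)), E ((i + j) + v) (((i + j) + v) + (j + a))⟫)]
  refine Finset.sum_congr rfl fun m _ => ?_
  have e1 : (j + m) + (j + a) = a + m := by
    funext n
    simp only [Pi.add_apply]
    linear_combination (j n) * (CharTwo.two_eq_zero : (2 : ZMod 2) = 0)
  have e2 : (i + j) + (j + m) = i + m := by
    funext n
    simp only [Pi.add_apply]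
    linear_combination (j n) * (CharTwo.two_eq_zero : (2 : ZMod 2) = 0)
  have e3 : ((i + j) + (j + m)) + (j + a) = (i + (j + a)) + m := by
    funext n
    simp only [Pi.add_apply]
    linear_combination (j n) * (CharTwo.two_eq_zero : (2 : ZMod 2) = 0)
  rw [e1, e3, e2]

end IDT
end
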